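/- arXiv:2112.09317 — 4 statements merged into one kernel-verified Lean document; each statement's English description precedes it below -/
import Mathlib

section
/- Let G be a finite insoluble group in which every proper subgroup is soluble. Then G/Φ(G) is a nonabelian simple group. -/
/-!
A proper normal subgroup `K` of `G` not contained in `Φ(G)` would supplement some maximal
subgroup `M`; then `K` and `G ⧸ K`, a quotient of `M`, are both soluble, and so is `G`.
Hence every proper normal subgroup of `G` lies in `Φ(G)`, which makes `G ⧸ Φ(G)` simple as soon
as it is nontrivial. Since `Φ(G)` is nilpotent, `G ⧸ Φ(G)` is insoluble, so it is neither trivial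
nor abelian.
-/

open Subgroup

section

variable {G : Type*} [Group G]

theorem Group.isSolvable_of_normal_sup_eq_top {K M : Subgroup G} [K.Normal]
    [Group.IsSolvable K] [Group.IsSolvable M] (h : K ⊔ M = ⊤) : Group.IsSolvable G := by
  have : Group.IsSolvable (G ⧸ K) := by
    refine Group.isSolvable_of_surjective (f := (QuotientGroup.mk' K).comp M.subtype) ?_
    rw [← MonoidHom.range_eq_top, MonoidHom.range_comp, range_subtype, eq_top_iff,
      ← (QuotientGroup.mk' K).range_eq_top.2 (QuotientGroup.mk'_surjective K),
      MonoidHom.range_eq_map, Subgroup.map_le_map_iff, QuotientGroup.ker_mk', sup_comm, h]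
  exact (Group.isSolvable_iff_subgroup_quotient K).2 ⟨‹_›, this⟩

theorem exists_isCoatom_sup_eq_top_of_not_le_frattini {K : Subgroup G}
    (h : ¬ K ≤ frattini G) : ∃ M, IsCoatom M ∧ K ⊔ M = ⊤ := by
  rw [frattini, Order.radical, le_iInf₂_iff] at h
  push Not at h
  obtain ⟨M, hM, hKM⟩ := h
  exact ⟨M, hM, hM.2 _ (right_lt_sup.2 hKM)⟩

theorem le_frattini_of_forall_ne_top_isSolvable (hG : ¬ Group.IsSolvable G)
    (hprop : ∀ H : Subgroup G, H ≠ ⊤ → Group.IsSolvable H) {K : Subgroup G} (hKn : K.Normal)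
    (hKt : K ≠ ⊤) : K ≤ frattini G := by
  by_contra h
  obtain ⟨M, hM, hKM⟩ := exists_isCoatom_sup_eq_top_of_not_le_frattini h
  have := hprop K hKt
  have := hprop M hM.1
  exact hG (Group.isSolvable_of_normal_sup_eq_top hKM)

theorem QuotientGroup.isSimpleGroup_of_forall_normal_le {N : Subgroup G} [N.Normal]
    [Nontrivial (G ⧸ N)] (h : ∀ K : Subgroup G, K.Normal → K ≠ ⊤ → K ≤ N) :
    IsSimpleGroup (G ⧸ N) := by
  refine ⟨fun H hH => ?_⟩
  rw [← map_comap_eq_self_of_surjective (mk'_surjective N) H]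
  by_cases hKt : H.comap (mk' N) = ⊤
  · exact .inr (hKt ▸ map_top_of_surjective _ (mk'_surjective N))
  · rw [Subgroup.map_eq_bot_iff, ker_mk']
    exact .inl (h _ (hH.comap _) hKt)

end

theorem stmt_1 (G : Type*) [Group G] [Finite G]
    (hG : ¬ IsSolvable G)
    (hprop : ∀ H : Subgroup G, H ≠ ⊤ → IsSolvable H) :
    IsSimpleGroup (G ⧸ frattini G) ∧ ∃ a b : G ⧸ frattini G, a * b ≠ b * a := by
  have : Group.IsSolvable (frattini G) := by
    have := frattini_nilpotent (G := G)
    infer_instance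
  have hQ : ¬ Group.IsSolvable (G ⧸ frattini G) := fun hQ =>
    hG ((Group.isSolvable_iff_subgroup_quotient _).2 ⟨‹_›, hQ⟩)
  have : Nontrivial (G ⧸ frattini G) :=
    not_subsingleton_iff_nontrivial.1 fun _ => hQ inferInstance
  refine ⟨QuotientGroup.isSimpleGroup_of_forall_normal_le fun K hKn hKt =>
    le_frattini_of_forall_ne_top_isSolvable hG hprop hKn hKt, ?_⟩
  by_contra! h
  exact hQ (Group.isSolvable_of_comm h)
end

section
/- Let G be a finite group such that G/Φ(G) is a nonabelian simple group all of whose proper subgroups are soluble. Then every proper subgroup of every maximal subgroup of G is soluble. -/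
/-!
A maximal subgroup `M` contains `Φ(G)`, so its image in `G ⧸ Φ(G)` is a proper subgroup and
hence soluble; the kernel `M ⊓ Φ(G)` of `M → G ⧸ Φ(G)` is soluble because `Φ(G)` is nilpotent.
So `M` itself, and with it every subgroup of `M`, is soluble.
-/

namespace Subgroup

variable {G G' : Type*} [Group G] [Group G']

theorem isSolvable_of_isSolvable_map (f : G →* G') [Group.IsSolvable f.ker] (M : Subgroup G)
    (hM : Group.IsSolvable (M.map f)) : Group.IsSolvable M := by
  have : Group.IsSolvable (f.ker.subgroupOf M) :=
    Group.isSolvable_of_isSolvable_injective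
      (f := (M.subtype.comp (f.ker.subgroupOf M).subtype).codRestrict f.ker fun x => x.2)
      fun a b hab => by
        ext
        exact congrArg (fun x : f.ker => (x : G)) hab
  refine Group.isSolvable_of_ker_le_range (f.ker.subgroupOf M).subtype (f.subgroupMap M) ?_
  intro x hx
  rw [range_subtype, mem_subgroupOf, MonoidHom.mem_ker]
  exact congrArg Subtype.val hx

theorem map_mk'_ne_top {N M : Subgroup G} [N.Normal] (hNM : N ≤ M) (hM : M ≠ ⊤) :
    M.map (QuotientGroup.mk' N) ≠ ⊤ := by
  intro h
  apply hM
  rw [← comap_map_eq_self (f := QuotientGroup.mk' N) (H := M) (by rwa [QuotientGroup.ker_mk']), h,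
    comap_top]

end Subgroup

theorem stmt_9_general (G : Type*) [Group G] [Finite G]
    (hsol : ∀ H : Subgroup (G ⧸ frattini G), H ≠ ⊤ → IsSolvable H) :
    ∀ M : Subgroup G, IsCoatom M → ∀ H : Subgroup M, H ≠ ⊤ → IsSolvable H := by
  intro M hM H _
  have : Group.IsSolvable (QuotientGroup.mk' (frattini G)).ker := by
    rw [QuotientGroup.ker_mk']
    have : Group.IsNilpotent (frattini G) := frattini_nilpotent
    infer_instance
  have : Group.IsSolvable M := M.isSolvable_of_isSolvable_map (QuotientGroup.mk' (frattini G))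
    (hsol _ (Subgroup.map_mk'_ne_top (frattini_le_coatom hM) hM.1))
  exact (inferInstance : Group.IsSolvable H)

theorem stmt_9 (G : Type*) [Group G] [Finite G]
    (hsimple : IsSimpleGroup (G ⧸ frattini G))
    (hnonab : ∃ a b : G ⧸ frattini G, a * b ≠ b * a)
    (hsol : ∀ H : Subgroup (G ⧸ frattini G), H ≠ ⊤ → IsSolvable H) :
    ∀ M : Subgroup G, IsCoatom M → ∀ H : Subgroup M, H ≠ ⊤ → IsSolvable H :=
  stmt_9_general G hsol
end

section
/- Let G be a finite group with a normal subgroup G₀ of prime index such that every proper subgroup of G₀ is soluble. Then every proper subgroup of every maximal subgroup of G is soluble. -/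
/-!
A subgroup `K` of `G` not containing `G₀` meets `G₀` in a proper subgroup of `G₀`, which is
soluble, and `K / (K ∩ G₀)` embeds in the cyclic group `G / G₀` of prime order; so `K` is soluble.
Since `G₀` has prime index it is maximal, so a proper subgroup of a maximal subgroup `M ≠ G`
cannot contain `G₀`.
-/

def ProperSubgroupsSolvable (G : Type*) [Group G] : Prop :=
  ∀ H : Subgroup G, H ≠ ⊤ → Group.IsSolvable H

namespace Subgroup

variable {G : Type*} [Group G]

theorem isCoatom_of_index_prime {N : Subgroup G} (hN : N.index.Prime) : IsCoatom N := by
  refine ⟨fun h ↦ hN.ne_one (index_eq_one.mpr h), fun K hNK ↦ ?_⟩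
  rcases (Nat.dvd_prime hN).mp (index_dvd_of_le hNK.le) with hK | hK
  · exact index_eq_one.mp hK
  · have hrel : N.relIndex K = 1 := by
      have := relIndex_mul_index hNK.le
      rw [hK] at this
      exact (Nat.mul_eq_right hN.ne_zero).mp this
    exact absurd (relIndex_eq_one.mp hrel) hNK.not_ge

theorem isSolvable_quotient_of_index_prime {N : Subgroup G} [N.Normal] (hN : N.index.Prime) :
    Group.IsSolvable (G ⧸ N) :=
  have : Fact (Nat.card (G ⧸ N)).Prime := ⟨hN⟩
  have : IsCyclic (G ⧸ N) := isCyclic_of_prime_card rfl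
  letI := IsCyclic.commGroup (α := G ⧸ N)
  inferInstance

theorem isSolvable_of_isSolvable_inf {N K : Subgroup G} [N.Normal] [Group.IsSolvable (G ⧸ N)]
    [Group.IsSolvable ↥(K ⊓ N)] : Group.IsSolvable K :=
  Group.isSolvable_of_ker_le_range (inclusion inf_le_left) ((QuotientGroup.mk' N).comp K.subtype)
    fun x hx ↦ ⟨⟨x, x.2, by simpa using hx⟩, rfl⟩

theorem isSolvable_of_lt {N K : Subgroup G} (hN : ProperSubgroupsSolvable N) (hKN : K < N) :
    Group.IsSolvable K :=
  have : Group.IsSolvable (K.subgroupOf N) :=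
    hN _ fun h ↦ hKN.not_ge (subgroupOf_eq_top.mp h)
  let e := (subgroupOfEquivOfLe hKN.le).symm
  Group.isSolvable_of_isSolvable_injective (f := e.toMonoidHom) e.injective

theorem isSolvable_of_not_le {N K : Subgroup G} [N.Normal] (hN : N.index.Prime)
    (hsol : ProperSubgroupsSolvable N) (hNK : ¬ N ≤ K) : Group.IsSolvable K :=
  have := isSolvable_quotient_of_index_prime hN
  have : Group.IsSolvable ↥(K ⊓ N) := isSolvable_of_lt hsol (inf_lt_right.mpr hNK)
  isSolvable_of_isSolvable_inf (N := N)

theorem properSubgroupsSolvable_of_ne_top {N M : Subgroup G} [N.Normal] (hN : N.index.Prime)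
    (hsol : ProperSubgroupsSolvable N) (hM : M ≠ ⊤) : ProperSubgroupsSolvable M := by
  intro H hH
  have hHM : H.map M.subtype < M := by
    simpa [← MonoidHom.range_eq_map] using
      (map_lt_map_iff_of_injective M.subtype_injective).mpr (lt_top_iff_ne_top.mpr hH)
  have hNH : ¬ N ≤ H.map M.subtype := fun h ↦
    hM ((isCoatom_of_index_prime hN).2 M (h.trans_lt hHM))
  have := isSolvable_of_not_le hN hsol hNH
  let e := H.equivMapOfInjective _ M.subtype_injective
  exact Group.isSolvable_of_isSolvable_injective (f := e.toMonoidHom) e.injective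

end Subgroup

theorem stmt_10_general (G : Type*) [Group G]
    (G₀ : Subgroup G) [hG₀ : G₀.Normal] (hidx : G₀.index.Prime)
    (hsol : ∀ H : Subgroup G₀, H ≠ ⊤ → IsSolvable H) :
    ∀ M : Subgroup G, IsCoatom M → ∀ H : Subgroup M, H ≠ ⊤ → IsSolvable H :=
  fun _ hM ↦ Subgroup.properSubgroupsSolvable_of_ne_top hidx hsol hM.1

theorem stmt_10 (G : Type*) [Group G] [Finite G]
    (G₀ : Subgroup G) [hG₀ : G₀.Normal] (hidx : G₀.index.Prime)
    (hsol : ∀ H : Subgroup G₀, H ≠ ⊤ → IsSolvable H) :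
    ∀ M : Subgroup G, IsCoatom M → ∀ H : Subgroup M, H ≠ ⊤ → IsSolvable H :=
  stmt_10_general G G₀ (hG₀ := hG₀) hidx hsol
end

section
/- Let G be a finite group such that every proper subgroup of every maximal subgroup of G is soluble. Then G has at most one insoluble composition factor. -/
/-!
If a composition series of `G` had insoluble factors at positions `i < j`, the insoluble group
`H (i+1)` would sit inside `H j`, hence inside a maximal subgroup `M ≥ H j`. All proper subgroups
of `M` are soluble, so `H (i+1) = M = H j`. Thus `H j` is maximal and `H (j+1) = G`, so the
`j`-th factor `G ⧸ H j` has no subgroups besides `⊥` and `⊤`: it is cyclic, hence soluble.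
-/

namespace Subgroup

variable {G : Type*} [Group G]

theorem isCyclic_of_isSimpleOrder [IsSimpleOrder (Subgroup G)] : IsCyclic G := by
  have : Nontrivial G := nontrivial_iff.1 inferInstance
  obtain ⟨g, hg⟩ := exists_ne (1 : G)
  have hg_top : zpowers g = ⊤ :=
    (IsSimpleOrder.eq_bot_or_eq_top (zpowers g)).resolve_left (zpowers_ne_bot.2 hg)
  exact ⟨⟨g, (eq_top_iff' _).1 hg_top⟩⟩

theorem isCoatom_subgroupOf_iff {K L : Subgroup G} (hKL : K ≤ L) :
    IsCoatom (K.subgroupOf L) ↔ K ⋖ L := by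
  let e : Subgroup L ≃o Set.Iic L := MapSubtype.orderIso L
  rw [← e.isCoatom_iff (K.subgroupOf L), Set.Iic.isCoatom_iff]
  exact Iff.of_eq (congrArg (· ⋖ L) (map_subgroupOf_eq_of_le hKL))

end Subgroup

section

open Subgroup

variable {G : Type*} [Group G]

theorem QuotientGroup.isSolvable_of_isCoatom {N : Subgroup G} [N.Normal] (hN : IsCoatom N) :
    Group.IsSolvable (G ⧸ N) :=
  have := (comapMk'OrderIso N).isSimpleOrder (h := Set.isSimpleOrder_Ici_iff_isCoatom.2 hN)
  Group.isSolvable_of_comm isCyclic_of_isSimpleOrder.commGroup.mul_comm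

theorem isSolvable_quotient_subgroupOf_of_le {C D : Subgroup G} [(C.subgroupOf D).Normal]
    (hDC : D ≤ C) : Group.IsSolvable (D ⧸ C.subgroupOf D) :=
  have := QuotientGroup.subsingleton_iff.2 (subgroupOf_eq_top.2 hDC)
  inferInstance

theorem eq_of_le_isCoatom_of_not_isSolvable
    (hyp : ∀ M : Subgroup G, IsCoatom M → ∀ H : Subgroup M, H ≠ ⊤ → Group.IsSolvable H)
    {K M : Subgroup G} (hM : IsCoatom M) (hKM : K ≤ M) (hK : ¬ Group.IsSolvable K) :
    K = M := by
  refine le_antisymm hKM (subgroupOf_eq_top.1 (not_not.1 fun hne ↦ hK ?_))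
  have := hyp M hM _ hne
  exact Group.isSolvable_of_isSolvable_injective (f := (subgroupOfEquivOfLe hKM).symm.toMonoidHom)
    (subgroupOfEquivOfLe hKM).symm.injective

theorem isSolvable_quotient_subgroupOf_of_not_isSolvable_le [IsCoatomic (Subgroup G)]
    (hyp : ∀ M : Subgroup G, IsCoatom M → ∀ H : Subgroup M, H ≠ ⊤ → Group.IsSolvable H)
    {B C D : Subgroup G} [(C.subgroupOf D).Normal]
    (hB : ¬ Group.IsSolvable B) (hBC : B ≤ C) (hCD : C ≤ D) :
    Group.IsSolvable (D ⧸ C.subgroupOf D) := by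
  obtain rfl | ⟨M, hM, hCM⟩ := eq_top_or_exists_le_coatom C
  · exact isSolvable_quotient_subgroupOf_of_le le_top
  have hBM : B = M := eq_of_le_isCoatom_of_not_isSolvable hyp hM (hBC.trans hCM) hB
  have hC : IsCoatom C := le_antisymm hCM (hBM ▸ hBC) ▸ hM
  obtain rfl | hCD := hCD.eq_or_lt
  · exact isSolvable_quotient_subgroupOf_of_le le_rfl
  obtain rfl : D = ⊤ := hC.lt_iff.1 hCD
  exact QuotientGroup.isSolvable_of_isCoatom
    ((isCoatom_subgroupOf_iff le_top).2 (covBy_top_iff.2 hC))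

end

theorem stmt_16_general (G : Type*) [Group G] [Finite G]
    (hyp : ∀ M : Subgroup G, IsCoatom M → ∀ H : Subgroup M, H ≠ ⊤ → IsSolvable H)
    (n : ℕ) (H : Fin (n + 1) → Subgroup G)
    (hmono : Monotone H)
    (hnormal : ∀ i : Fin n, ((H i.castSucc).subgroupOf (H i.succ)).Normal) :
    ∀ i j : Fin n,
      (haveI := hnormal i; ¬ IsSolvable (H i.succ ⧸ (H i.castSucc).subgroupOf (H i.succ))) →
      (haveI := hnormal j; ¬ IsSolvable (H j.succ ⧸ (H j.castSucc).subgroupOf (H j.succ))) →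
      i = j := by
  have later_factor_solvable : ∀ i j : Fin n, i < j →
      (haveI := hnormal i;
        ¬ Group.IsSolvable (H i.succ ⧸ (H i.castSucc).subgroupOf (H i.succ))) →
      (haveI := hnormal j;
        Group.IsSolvable (H j.succ ⧸ (H j.castSucc).subgroupOf (H j.succ))) := by
    intro i j hij hi
    have hB : ¬ Group.IsSolvable (H i.succ) := fun _ ↦ hi inferInstance
    exact isSolvable_quotient_subgroupOf_of_not_isSolvable_le hyp hB
      (hmono (Fin.succ_le_castSucc_iff.2 hij)) (hmono j.castSucc_le_succ)
  intro i j hi hj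
  exact le_antisymm (not_lt.1 fun h ↦ hi (later_factor_solvable j i h hj))
    (not_lt.1 fun h ↦ hj (later_factor_solvable i j h hi))

theorem stmt_16 (G : Type*) [Group G] [Finite G]
    (hyp : ∀ M : Subgroup G, IsCoatom M → ∀ H : Subgroup M, H ≠ ⊤ → IsSolvable H)
    (n : ℕ) (H : Fin (n + 1) → Subgroup G)
    (hmono : Monotone H) (h0 : H 0 = ⊥) (hn : H (Fin.last n) = ⊤)
    (hnormal : ∀ i : Fin n, ((H i.castSucc).subgroupOf (H i.succ)).Normal)
    (hsimple : ∀ i : Fin n,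
      haveI := hnormal i; IsSimpleGroup (H i.succ ⧸ (H i.castSucc).subgroupOf (H i.succ))) :
    ∀ i j : Fin n,
      (haveI := hnormal i; ¬ IsSolvable (H i.succ ⧸ (H i.castSucc).subgroupOf (H i.succ))) →
      (haveI := hnormal j; ¬ IsSolvable (H j.succ ⧸ (H j.castSucc).subgroupOf (H j.succ))) →
      i = j :=
  stmt_16_general G hyp n H hmono hnormal
end
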